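/- For any finitely supported real sequence (u_n)_{n≥0} with u_0 = 0, we have ∑_{n≥1} (u_n - u_{n-1})² ≥ ∑_{n≥1} (Δ√n / √n) u_n², where Δ√n = 2√n - √(n+1) - √(n-1). -/

import Mathlib

/-!
Ground state transform with `φ n = √n`. For `s, t > 0` one has the edge identity
`(a - b)² = (1 - s/t) a² + (1 - t/s) b² + (s a - t b)² / (s t)`; applying it to each edge
`(n, n+1)` with `s = φ n`, `t = φ (n+1)` and dropping the square gives a lower bound for the energy
of `u` whose vertex weights add up to `(2 φ (n+1) - φ n - φ (n+2)) / φ (n+1)` at `n + 1`.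
The vertex `0`, where `φ 0 = 0`, is harmless because `u 0 = 0`.
-/

open Finset

lemma sq_sub_ge_of_pos {s t : ℝ} (hs : 0 < s) (ht : 0 < t) (a b : ℝ) :
    (1 - s / t) * a ^ 2 + (1 - t / s) * b ^ 2 ≤ (a - b) ^ 2 := by
  have key : (a - b) ^ 2 - ((1 - s / t) * a ^ 2 + (1 - t / s) * b ^ 2) =
      (s * a - t * b) ^ 2 / (s * t) := by
    field_simp
    ring
  have : 0 ≤ (s * a - t * b) ^ 2 / (s * t) := by positivity
  linarith

theorem sum_weight_mul_sq_le_sum_sq_sub (φ : ℕ → ℝ) (hφ0 : 0 ≤ φ 0) (hφ : ∀ n, 0 < φ (n + 1))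
    (u : ℕ → ℝ) (h0 : u 0 = 0) (N : ℕ) (hN : u N = 0) :
    ∑ n ∈ range N, (2 * φ (n + 1) - φ n - φ (n + 2)) / φ (n + 1) * u (n + 1) ^ 2 ≤
      ∑ n ∈ range N, (u (n + 1) - u n) ^ 2 := by
  -- Telescoping `S` shifts the `(1 - t/s) b²` part of each edge bound onto the vertex `n + 1`.
  set S : ℕ → ℝ := fun n => (φ (n + 1) / φ n - 1) * u n ^ 2
  have hstep : ∀ n, (2 * φ (n + 1) - φ n - φ (n + 2)) / φ (n + 1) * u (n + 1) ^ 2 ≤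
      (u (n + 1) - u n) ^ 2 - (S (n + 1) - S n) := by
    intro n
    have hw : (2 * φ (n + 1) - φ n - φ (n + 2)) / φ (n + 1) =
        (1 - φ n / φ (n + 1)) + (1 - φ (n + 2) / φ (n + 1)) := by
      field_simp [(hφ n).ne']
      ring
    rw [hw]
    cases n with
    | zero =>
      have : 0 ≤ φ 0 / φ 1 * u 1 ^ 2 := by have := hφ 0; positivity
      simp only [S, h0]
      nlinarith
    | succ m =>
      have := sq_sub_ge_of_pos (hφ m) (hφ (m + 1)) (u (m + 2)) (u (m + 1))
      simp only [S]
      linarith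
  calc ∑ n ∈ range N, (2 * φ (n + 1) - φ n - φ (n + 2)) / φ (n + 1) * u (n + 1) ^ 2
      ≤ ∑ n ∈ range N, ((u (n + 1) - u n) ^ 2 - (S (n + 1) - S n)) :=
        sum_le_sum fun n _ => hstep n
    _ = ∑ n ∈ range N, (u (n + 1) - u n) ^ 2 := by
        rw [sum_sub_distrib, sum_range_sub]
        simp [S, h0, hN]

theorem discrete_hardy_optimal_weight (u : ℕ → ℝ) (hfin : ∃ N, ∀ n ≥ N, u n = 0)
    (h0 : u 0 = 0) :
    ∑' n : ℕ, (u (n + 1) - u n) ^ 2 ≥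
      ∑' n : ℕ,
        ((2 * Real.sqrt ((n : ℝ) + 1) - Real.sqrt ((n : ℝ) + 2) - Real.sqrt (n : ℝ)) /
            Real.sqrt ((n : ℝ) + 1)) * (u (n + 1)) ^ 2 := by
  obtain ⟨N, hN⟩ := hfin
  have hvanish : ∀ n ∉ range N, u n = 0 ∧ u (n + 1) = 0 := fun n hn => by
    simp only [mem_range, not_lt] at hn
    exact ⟨hN n hn, hN (n + 1) (by omega)⟩
  rw [ge_iff_le, tsum_eq_sum fun n hn => by simp [(hvanish n hn).2],
    tsum_eq_sum fun n hn => by simp [(hvanish n hn).1, (hvanish n hn).2]]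
  have hardy := sum_weight_mul_sq_le_sum_sq_sub (fun n => Real.sqrt n) (Real.sqrt_nonneg _)
    (fun n => Real.sqrt_pos.mpr (by positivity)) u h0 N (hN N le_rfl)
  refine le_of_eq_of_le (sum_congr rfl fun n _ => ?_) hardy
  push_cast
  ring_nf
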